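/- In the two-sided sequential matching model, assume consumers follow MNL models with scores v_ij > 0, each demand function Q_j : 2^N → [0,1] is monotone with Q_j(∅) = 0, and cardinality budgets K_i ∈ ℤ_+ are given. For any x̂ ∈ {0,1}^{N×V} with Σ_{j∈V} x̂_ij ≤ K_i for all i ∈ N, the point defined by ŵ_i = 1/(1 + Σ_{ℓ∈V} v_iℓ x̂_iℓ), ŷ_ij = x̂_ij·ŵ_i, and ẑ_j = min{1, Σ_{i∈N} v_ij ŷ_ij} is feasible for the cardinality-constrained LP relaxation (11); in particular it satisfies Σ_{j∈V} ŷ_ij ≤ K_i ŵ_i. Consequently, OPT = max over assortment families S with |S_i| ≤ K_i of E[M_S] satisfies OPT ≤ OPT_LPcard. -/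

import Mathlib

/-! Under MNL, consumer `i` buys `j` from `S i` with probability `v i j * ŷ i j`, and `ŵ i` is
the no-purchase probability, so `ŵ`, `ŷ` satisfy the balance and cardinality constraints by
construction. Since consumers choose independently and `Q j ≤ 1`, `Q j ∅ = 0`, the expected
demand `E[Q j (A_j)]` is at most `P(A_j ≠ ∅) = 1 - ∏ i, (1 - p i j) ≤ min 1 (∑ i, p i j) = ẑ j`. -/

/-- Expected revenue of the matching when the assortment family is `S`:
`E[M_S] = ∑_j r_j · E[Q_j(A_j^S)]`, where consumer `i` independently selects supplier `j`
with probability `pc i j (S i)`. -/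
def expRev {ι κ : Type*} [Fintype ι] [Fintype κ] [DecidableEq ι]
    (pc : ι → κ → Finset κ → ℝ) (Q : κ → Finset ι → ℝ) (r : κ → ℝ)
    (S : ι → Finset κ) : ℝ :=
  ∑ j : κ, r j * ∑ A : Finset ι,
    Q j A * ((∏ i ∈ A, pc i j (S i)) * ∏ i ∈ Aᶜ, (1 - pc i j (S i)))

/-- Multinomial logit choice probabilities with scores `v`. -/
noncomputable def pcMNL {ι κ : Type*} [DecidableEq κ] (v : ι → κ → ℝ) (i : ι) (j : κ)
    (S : Finset κ) : ℝ :=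
  if j ∈ S then v i j / (1 + ∑ ℓ ∈ S, v i ℓ) else 0

open Finset

theorem one_sub_sum_le_prod_one_sub {ι R : Type*} [CommRing R] [LinearOrder R]
    [IsStrictOrderedRing R] (s : Finset ι) {p : ι → R} (hp0 : ∀ i, 0 ≤ p i)
    (hp1 : ∀ i, p i ≤ 1) :
    1 - ∑ i ∈ s, p i ≤ ∏ i ∈ s, (1 - p i) := by
  induction s using Finset.cons_induction with
  | empty => simp
  | cons a s ha ih =>
    rw [sum_cons, prod_cons]
    have hsum : 0 ≤ ∑ i ∈ s, p i := sum_nonneg fun i _ => hp0 i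
    have hprod : (1 - p a) * (1 - ∑ i ∈ s, p i) ≤ (1 - p a) * ∏ i ∈ s, (1 - p i) :=
      mul_le_mul_of_nonneg_left ih (sub_nonneg.2 (hp1 a))
    nlinarith [hp0 a]

section Bernoulli

variable {ι R : Type*} [Fintype ι] [DecidableEq ι] [CommRing R]

/-- The probability that the set of successes of independent Bernoulli trials with success
probabilities `p i` is exactly `A`. -/
def bernoulliWeight (p : ι → R) (A : Finset ι) : R :=
  (∏ i ∈ A, p i) * ∏ i ∈ Aᶜ, (1 - p i)

theorem sum_bernoulliWeight (p : ι → R) : ∑ A, bernoulliWeight p A = 1 := by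
  simpa [bernoulliWeight] using (Fintype.prod_add p (fun i => 1 - p i)).symm

theorem bernoulliWeight_empty (p : ι → R) : bernoulliWeight p ∅ = ∏ i, (1 - p i) := by
  simp [bernoulliWeight]

variable [LinearOrder R] [IsStrictOrderedRing R] {p : ι → R}

theorem bernoulliWeight_nonneg (hp0 : ∀ i, 0 ≤ p i) (hp1 : ∀ i, p i ≤ 1) (A : Finset ι) :
    0 ≤ bernoulliWeight p A :=
  mul_nonneg (prod_nonneg fun i _ => hp0 i) (prod_nonneg fun i _ => sub_nonneg.2 (hp1 i))

theorem sum_mul_bernoulliWeight_le_one_sub_prod (hp0 : ∀ i, 0 ≤ p i) (hp1 : ∀ i, p i ≤ 1)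
    {Q : Finset ι → R} (hQ1 : ∀ A, Q A ≤ 1) (hQ0 : Q ∅ = 0) :
    ∑ A, Q A * bernoulliWeight p A ≤ 1 - ∏ i, (1 - p i) := by
  have hsplit := add_sum_erase univ (bernoulliWeight p) (mem_univ ∅)
  rw [sum_bernoulliWeight, bernoulliWeight_empty] at hsplit
  calc ∑ A, Q A * bernoulliWeight p A
      = ∑ A ∈ univ.erase ∅, Q A * bernoulliWeight p A :=
        (sum_erase univ (by rw [hQ0, zero_mul])).symm
    _ ≤ ∑ A ∈ univ.erase ∅, bernoulliWeight p A :=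
        sum_le_sum fun A _ =>
          mul_le_of_le_one_left (bernoulliWeight_nonneg hp0 hp1 A) (hQ1 A)
    _ = 1 - ∏ i, (1 - p i) := eq_sub_of_add_eq' hsplit

theorem sum_mul_bernoulliWeight_le_min (hp0 : ∀ i, 0 ≤ p i) (hp1 : ∀ i, p i ≤ 1)
    {Q : Finset ι → R} (hQ1 : ∀ A, Q A ≤ 1) (hQ0 : Q ∅ = 0) :
    ∑ A, Q A * bernoulliWeight p A ≤ min 1 (∑ i, p i) := by
  have hle := sum_mul_bernoulliWeight_le_one_sub_prod hp0 hp1 hQ1 hQ0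
  have hprod : 0 ≤ ∏ i, (1 - p i) := prod_nonneg fun i _ => sub_nonneg.2 (hp1 i)
  have hunion := one_sub_sum_le_prod_one_sub univ hp0 hp1
  exact le_min (by linarith) (by linarith)

end Bernoulli

/-- The point `(ŷ, ŵ, ẑ)` induced by the assortment family `S`; `inducedW v S i` is the
no-purchase probability of consumer `i`. -/
noncomputable def inducedW {ι κ : Type*} (v : ι → κ → ℝ) (S : ι → Finset κ) (i : ι) : ℝ :=
  1 / (1 + ∑ ℓ ∈ S i, v i ℓ)

noncomputable def inducedY {ι κ : Type*} [DecidableEq κ] (v : ι → κ → ℝ) (S : ι → Finset κ)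
    (i : ι) (j : κ) : ℝ :=
  (if j ∈ S i then (1 : ℝ) else 0) * inducedW v S i

noncomputable def inducedZ {ι κ : Type*} [Fintype ι] [DecidableEq κ] (v : ι → κ → ℝ)
    (S : ι → Finset κ) (j : κ) : ℝ :=
  min 1 (∑ i, v i j * inducedY v S i j)

def LPCardFeasible {ι κ : Type*} [Fintype ι] [Fintype κ] (v : ι → κ → ℝ) (K : ι → ℕ)
    (y : ι → κ → ℝ) (w : ι → ℝ) (z : κ → ℝ) : Prop :=
  (∀ j, z j ≤ 1) ∧
  (∀ j, z j ≤ ∑ i, v i j * y i j) ∧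
  (∀ i, w i + ∑ j, v i j * y i j = 1) ∧
  (∀ i, ∑ j, y i j ≤ (K i : ℝ) * w i) ∧
  (∀ i j, 0 ≤ y i j ∧ y i j ≤ w i)

section InducedPoint

variable {ι κ : Type*} {v : ι → κ → ℝ} (S : ι → Finset κ)

theorem one_add_sum_pos (hv : ∀ i j, 0 ≤ v i j) (i : ι) : 0 < 1 + ∑ ℓ ∈ S i, v i ℓ :=
  add_pos_of_pos_of_nonneg one_pos (sum_nonneg fun ℓ _ => hv i ℓ)

theorem inducedW_pos (hv : ∀ i j, 0 ≤ v i j) (i : ι) : 0 < inducedW v S i :=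
  one_div_pos.2 (one_add_sum_pos S hv i)

variable [DecidableEq κ]

theorem inducedY_nonneg (hv : ∀ i j, 0 ≤ v i j) (i : ι) (j : κ) : 0 ≤ inducedY v S i j :=
  mul_nonneg (by split_ifs <;> norm_num) (inducedW_pos S hv i).le

theorem inducedY_le_inducedW (hv : ∀ i j, 0 ≤ v i j) (i : ι) (j : κ) :
    inducedY v S i j ≤ inducedW v S i :=
  mul_le_of_le_one_left (inducedW_pos S hv i).le (by split_ifs <;> norm_num)

theorem mul_inducedY_eq_pcMNL (i : ι) (j : κ) : v i j * inducedY v S i j = pcMNL v i j (S i) := by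
  unfold inducedY inducedW pcMNL
  split_ifs <;> simp [div_eq_mul_inv]

theorem pcMNL_le_one (hv : ∀ i j, 0 ≤ v i j) (i : ι) (j : κ) : pcMNL v i j (S i) ≤ 1 := by
  unfold pcMNL
  split_ifs with hj
  · rw [div_le_one (one_add_sum_pos S hv i)]
    linarith [single_le_sum (fun ℓ _ => hv i ℓ) hj]
  · exact zero_le_one

variable [Fintype κ]

theorem sum_inducedY (i : ι) : ∑ j, inducedY v S i j = #(S i) * inducedW v S i := by
  simp only [inducedY, ite_mul, one_mul, zero_mul, sum_ite_mem, univ_inter, sum_const,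
    nsmul_eq_mul]

theorem inducedW_add_sum_mul_inducedY (hv : ∀ i j, 0 ≤ v i j) (i : ι) :
    inducedW v S i + ∑ j, v i j * inducedY v S i j = 1 := by
  have hD := (one_add_sum_pos S hv i).ne'
  simp only [mul_inducedY_eq_pcMNL, pcMNL, sum_ite_mem, univ_inter, ← sum_div, inducedW]
  field_simp

variable [Fintype ι]

theorem lpCardFeasible_induced (hv : ∀ i j, 0 ≤ v i j) (K : ι → ℕ)
    (hcard : ∀ i, #(S i) ≤ K i) :
    LPCardFeasible v K (inducedY v S) (inducedW v S) (inducedZ v S) := by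
  refine ⟨fun j => min_le_left _ _, fun j => min_le_right _ _,
    inducedW_add_sum_mul_inducedY S hv, fun i => ?_,
    fun i j => ⟨inducedY_nonneg S hv i j, inducedY_le_inducedW S hv i j⟩⟩
  rw [sum_inducedY]
  exact mul_le_mul_of_nonneg_right (by exact_mod_cast hcard i) (inducedW_pos S hv i).le

theorem expRev_pcMNL_le_sum_mul_inducedZ [DecidableEq ι] (hv : ∀ i j, 0 ≤ v i j)
    {Q : κ → Finset ι → ℝ} (hQ1 : ∀ j A, Q j A ≤ 1) (hQ0 : ∀ j, Q j ∅ = 0)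
    {r : κ → ℝ} (hr : ∀ j, 0 ≤ r j) :
    expRev (pcMNL v) Q r S ≤ ∑ j, r j * inducedZ v S j := by
  refine sum_le_sum fun j _ => mul_le_mul_of_nonneg_left ?_ (hr j)
  have hp0 : ∀ i, 0 ≤ pcMNL v i j (S i) := fun i =>
    mul_inducedY_eq_pcMNL S i j ▸ mul_nonneg (hv i j) (inducedY_nonneg S hv i j)
  simpa only [bernoulliWeight, inducedZ, mul_inducedY_eq_pcMNL] using
    sum_mul_bernoulliWeight_le_min hp0 (fun i => pcMNL_le_one S hv i j) (hQ1 j) (hQ0 j)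

end InducedPoint

theorem lp_relaxation_card_feasible_and_upper_bound_general
    {ι κ : Type*} [Fintype ι] [Fintype κ] [DecidableEq ι] [DecidableEq κ]
    (v : ι → κ → ℝ) (hv : ∀ i j, 0 < v i j)
    (Q : κ → Finset ι → ℝ)
    (hQrange : ∀ j A, Q j A ∈ Set.Icc (0 : ℝ) 1)
    (hQ0 : ∀ j, Q j ∅ = 0)
    (r : κ → ℝ) (hr : ∀ j, 0 ≤ r j)
    (K : ι → ℕ)
    (S : ι → Finset κ) (hcard : ∀ i, (S i).card ≤ K i) :
    -- feasibility of the induced point `(ŷ, ŵ, ẑ)` for LP (11)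
    (∀ j : κ, min 1 (∑ i : ι, v i j *
        ((if j ∈ S i then (1 : ℝ) else 0) * (1 / (1 + ∑ ℓ ∈ S i, v i ℓ)))) ≤ 1) ∧
    (∀ j : κ, min 1 (∑ i : ι, v i j *
        ((if j ∈ S i then (1 : ℝ) else 0) * (1 / (1 + ∑ ℓ ∈ S i, v i ℓ)))) ≤
      ∑ i : ι, v i j *
        ((if j ∈ S i then (1 : ℝ) else 0) * (1 / (1 + ∑ ℓ ∈ S i, v i ℓ)))) ∧
    (∀ i : ι, (1 / (1 + ∑ ℓ ∈ S i, v i ℓ)) + ∑ j : κ, v i j *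
        ((if j ∈ S i then (1 : ℝ) else 0) * (1 / (1 + ∑ ℓ ∈ S i, v i ℓ))) = 1) ∧
    (∀ i : ι, ∑ j : κ, (if j ∈ S i then (1 : ℝ) else 0) * (1 / (1 + ∑ ℓ ∈ S i, v i ℓ)) ≤
      (K i : ℝ) * (1 / (1 + ∑ ℓ ∈ S i, v i ℓ))) ∧
    (∀ (i : ι) (j : κ),
      0 ≤ (if j ∈ S i then (1 : ℝ) else 0) * (1 / (1 + ∑ ℓ ∈ S i, v i ℓ)) ∧
      (if j ∈ S i then (1 : ℝ) else 0) * (1 / (1 + ∑ ℓ ∈ S i, v i ℓ)) ≤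
        1 / (1 + ∑ ℓ ∈ S i, v i ℓ)) ∧
    -- consequently, `OPT ≤ OPT_LPcard`
    (∀ S' : ι → Finset κ, (∀ i, (S' i).card ≤ K i) →
      ∃ (y : ι → κ → ℝ) (w : ι → ℝ) (z : κ → ℝ),
        (∀ j, z j ≤ 1) ∧
        (∀ j, z j ≤ ∑ i : ι, v i j * y i j) ∧
        (∀ i, w i + ∑ j : κ, v i j * y i j = 1) ∧
        (∀ i, ∑ j : κ, y i j ≤ (K i : ℝ) * w i) ∧
        (∀ i j, 0 ≤ y i j ∧ y i j ≤ w i) ∧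
        expRev (pcMNL v) Q r S' ≤ ∑ j : κ, r j * z j) := by
  have hv' : ∀ i j, 0 ≤ v i j := fun i j => (hv i j).le
  have hQ1 : ∀ j A, Q j A ≤ 1 := fun j A => (hQrange j A).2
  obtain ⟨hz1, hzy, hwy, hyK, hyw⟩ := lpCardFeasible_induced S hv' K hcard
  refine ⟨hz1, hzy, hwy, hyK, hyw, fun S' hS' => ?_⟩
  obtain ⟨hz1', hzy', hwy', hyK', hyw'⟩ := lpCardFeasible_induced S' hv' K hS'
  exact ⟨inducedY v S', inducedW v S', inducedZ v S', hz1', hzy', hwy', hyK', hyw',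
    expRev_pcMNL_le_sum_mul_inducedZ S' hv' hQ1 hQ0 hr⟩

/-- **Lemma 3.6.** For MNL consumers under cardinality budgets `K_i`,
every assortment family with `|S_i| ≤ K_i` induces a feasible point of the
cardinality-constrained LP relaxation (11); in particular the induced point satisfies
`∑_j ŷ_{ij} ≤ K_i ŵ_i`. Consequently, `OPT ≤ OPT_LPcard`. -/
theorem lp_relaxation_card_feasible_and_upper_bound
    {ι κ : Type*} [Fintype ι] [Fintype κ] [DecidableEq ι] [DecidableEq κ]
    (v : ι → κ → ℝ) (hv : ∀ i j, 0 < v i j)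
    (Q : κ → Finset ι → ℝ)
    (hQrange : ∀ j A, Q j A ∈ Set.Icc (0 : ℝ) 1)
    (hQ0 : ∀ j, Q j ∅ = 0)
    (hQmono : ∀ j (A B : Finset ι), A ⊆ B → Q j A ≤ Q j B)
    (r : κ → ℝ) (hr : ∀ j, 0 ≤ r j)
    (K : ι → ℕ)
    (S : ι → Finset κ) (hcard : ∀ i, (S i).card ≤ K i) :
    -- feasibility of the induced point `(ŷ, ŵ, ẑ)` for LP (11)
    (∀ j : κ, min 1 (∑ i : ι, v i j *
        ((if j ∈ S i then (1 : ℝ) else 0) * (1 / (1 + ∑ ℓ ∈ S i, v i ℓ)))) ≤ 1) ∧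
    (∀ j : κ, min 1 (∑ i : ι, v i j *
        ((if j ∈ S i then (1 : ℝ) else 0) * (1 / (1 + ∑ ℓ ∈ S i, v i ℓ)))) ≤
      ∑ i : ι, v i j *
        ((if j ∈ S i then (1 : ℝ) else 0) * (1 / (1 + ∑ ℓ ∈ S i, v i ℓ)))) ∧
    (∀ i : ι, (1 / (1 + ∑ ℓ ∈ S i, v i ℓ)) + ∑ j : κ, v i j *
        ((if j ∈ S i then (1 : ℝ) else 0) * (1 / (1 + ∑ ℓ ∈ S i, v i ℓ))) = 1) ∧
    (∀ i : ι, ∑ j : κ, (if j ∈ S i then (1 : ℝ) else 0) * (1 / (1 + ∑ ℓ ∈ S i, v i ℓ)) ≤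
      (K i : ℝ) * (1 / (1 + ∑ ℓ ∈ S i, v i ℓ))) ∧
    (∀ (i : ι) (j : κ),
      0 ≤ (if j ∈ S i then (1 : ℝ) else 0) * (1 / (1 + ∑ ℓ ∈ S i, v i ℓ)) ∧
      (if j ∈ S i then (1 : ℝ) else 0) * (1 / (1 + ∑ ℓ ∈ S i, v i ℓ)) ≤
        1 / (1 + ∑ ℓ ∈ S i, v i ℓ)) ∧
    -- consequently, `OPT ≤ OPT_LPcard`
    (∀ S' : ι → Finset κ, (∀ i, (S' i).card ≤ K i) →
      ∃ (y : ι → κ → ℝ) (w : ι → ℝ) (z : κ → ℝ),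
        (∀ j, z j ≤ 1) ∧
        (∀ j, z j ≤ ∑ i : ι, v i j * y i j) ∧
        (∀ i, w i + ∑ j : κ, v i j * y i j = 1) ∧
        (∀ i, ∑ j : κ, y i j ≤ (K i : ℝ) * w i) ∧
        (∀ i j, 0 ≤ y i j ∧ y i j ≤ w i) ∧
        expRev (pcMNL v) Q r S' ≤ ∑ j : κ, r j * z j) :=
  lp_relaxation_card_feasible_and_upper_bound_general v hv Q hQrange hQ0 r hr K S hcard
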